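/- arXiv:2603.14904 — 4 statements merged into one kernel-verified Lean document; each statement's English description precedes it below -/
import Mathlib

section
/- There exists n₀ > 0 such that for all integers k, l ≥ 0 with n := k + l > n₀, one has ((k+l+1)!/(k!·l!)) · (k/(k+l))^k · (l/(k+l))^l < 3 n^{3/2}. -/
theorem stmt_3 : ∃ n₀ : ℕ, 0 < n₀ ∧ ∀ k l : ℕ, n₀ < k + l →
    ((k + l + 1).factorial : ℝ) / (k.factorial * l.factorial) *
        ((k : ℝ) / (k + l)) ^ k * ((l : ℝ) / (k + l)) ^ l <
      3 * ((k + l : ℕ) : ℝ) ^ ((3 : ℝ) / 2) := by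
  refine ⟨1, one_pos, fun k l hn => ?_⟩
  have hn2 : 2 ≤ k + l := hn
  have hkle : k ≤ k + l := Nat.le_add_right k l
  have hnpos : (0:ℝ) < ((k + l : ℕ) : ℝ) := by
    exact_mod_cast Nat.lt_of_lt_of_le Nat.zero_lt_two hn2
  -- key combinatorial inequality
  have hkey : (k + l).choose k * k ^ k * l ^ l ≤ (k + l) ^ (k + l) := by
    have h := add_pow k l (k + l)
    have hmem : k ∈ Finset.range (k + l + 1) := Finset.mem_range.mpr (Nat.lt_succ_of_le hkle)
    have hterm : k ^ k * l ^ (k + l - k) * (k + l).choose k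
        ≤ ∑ i ∈ Finset.range (k + l + 1), k ^ i * l ^ (k + l - i) * (k + l).choose i :=
      Finset.single_le_sum (f := fun i => k ^ i * l ^ (k + l - i) * (k + l).choose i)
        (fun i _ => Nat.zero_le _) hmem
    have hsub : k + l - k = l := by omega
    rw [hsub] at hterm
    calc (k + l).choose k * k ^ k * l ^ l
        = k ^ k * l ^ l * (k + l).choose k := by ring
      _ ≤ ∑ i ∈ Finset.range (k + l + 1), k ^ i * l ^ (k + l - i) * (k + l).choose i := hterm
      _ = (k + l) ^ (k + l) := h.symm
  have hfact : ((k + l).factorial : ℝ) =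
      ((k + l).choose k : ℝ) * k.factorial * l.factorial := by
    have := Nat.choose_mul_factorial_mul_factorial hkle
    rw [Nat.add_sub_cancel_left] at this
    exact_mod_cast this.symm
  have hkf : (0:ℝ) < (k.factorial : ℝ) := by exact_mod_cast k.factorial_pos
  have hlf : (0:ℝ) < (l.factorial : ℝ) := by exact_mod_cast l.factorial_pos
  -- rewrite LHS
  have hLHS : ((k + l + 1).factorial : ℝ) / (k.factorial * l.factorial) *
        ((k : ℝ) / (k + l)) ^ k * ((l : ℝ) / (k + l)) ^ l
      = ((k + l + 1 : ℕ) : ℝ) * (((k + l).choose k : ℝ) * k ^ k * l ^ l)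
          / ((k + l : ℕ) : ℝ) ^ (k + l) := by
    have hn0 : ((k:ℝ) + l) ≠ 0 := by push_cast at hnpos; linarith
    rw [Nat.factorial_succ]
    push_cast [hfact]
    rw [div_pow, div_pow]
    field_simp [hkf.ne', hlf.ne', hn0]
    ring
  rw [hLHS]
  have hcast : (((k + l).choose k : ℝ) * k ^ k * l ^ l) ≤ ((k + l : ℕ) : ℝ) ^ (k + l) := by
    exact_mod_cast hkey
  have hnum : ((k + l + 1 : ℕ) : ℝ) * (((k + l).choose k : ℝ) * k ^ k * l ^ l)
      / ((k + l : ℕ) : ℝ) ^ (k + l) ≤ ((k + l + 1 : ℕ) : ℝ) := by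
    rw [div_le_iff₀ (by positivity)]
    have h1 : (0:ℝ) ≤ ((k + l + 1 : ℕ) : ℝ) := by positivity
    calc ((k + l + 1 : ℕ) : ℝ) * (((k + l).choose k : ℝ) * k ^ k * l ^ l)
        ≤ ((k + l + 1 : ℕ) : ℝ) * ((k + l : ℕ) : ℝ) ^ (k + l) :=
          mul_le_mul_of_nonneg_left hcast h1
      _ = _ := rfl
  refine lt_of_le_of_lt hnum ?_
  -- n + 1 < 3 * n ^ (3/2)
  have hge1 : (1:ℝ) ≤ ((k + l : ℕ) : ℝ) := by exact_mod_cast Nat.one_le_of_lt hn2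
  have hrpow : ((k + l : ℕ) : ℝ) ≤ ((k + l : ℕ) : ℝ) ^ ((3:ℝ)/2) := by
    calc ((k + l : ℕ) : ℝ) = ((k + l : ℕ) : ℝ) ^ (1:ℝ) := (Real.rpow_one _).symm
      _ ≤ _ := Real.rpow_le_rpow_of_exponent_le hge1 (by norm_num)
  have h2 : ((k + l + 1 : ℕ) : ℝ) < 3 * ((k + l : ℕ) : ℝ) := by
    push_cast
    have : (2:ℝ) ≤ ((k + l : ℕ) : ℝ) := by exact_mod_cast hn2
    push_cast at this ⊢
    linarith
  calc ((k + l + 1 : ℕ) : ℝ) < 3 * ((k + l : ℕ) : ℝ) := h2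
    _ ≤ 3 * ((k + l : ℕ) : ℝ) ^ ((3:ℝ)/2) := by linarith [hrpow]
end

section
/- Fast decay of Beta densities: for any ε₀ ∈ (0, 1/2) there exists n₀ > 0 such that for all n > n₀ and all integers k, l ≥ 0 with k + l = n, one has ρ_{k,l}(s) ≤ 3 n^{3/2} · exp(-(1/18) n^{2ε₀}) whenever s ∈ [0,1] satisfies |s - k/n| ≥ n^{-1/2+ε₀}. -/
/-- The density of the Beta distribution `Be(k+1, l+1)` on `[0,1]`. -/
noncomputable def rho (k l : ℕ) (s : ℝ) : ℝ :=
  ((k + l + 1).factorial : ℝ) / (k.factorial * l.factorial) * s ^ k * (1 - s) ^ l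

/-!
Put `n = k + l`, `p = k / n`, `q = l / n`. For `s ≥ p`, the bound `1 + x ≤ eˣ` gives
`s^k ≤ p^k e^{n(s-p)}`, and `1 - v ≤ e^{-v-v²/2}` gives
`(1-s)^l ≤ q^l e^{-n(s-p) - n(s-p)²/2}`. The linear terms cancel because `k / p = l / q = n`,
and the case `s ≤ p` follows by symmetry. Since `C(n,k) pᵏ qˡ ≤ 1` is one term of `(p + q)ⁿ`,
this gives `ρ_{k,l}(s) ≤ (n+1) e^{-n(s-p)²/2}`, and `|s - p| ≥ n^{-1/2+ε₀}` makes the exponent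
at most `-n^{2ε₀}/2`.
-/

open Real Finset

lemma one_sub_le_exp_neg_add_sq_div_two {v : ℝ} (h0 : 0 ≤ v) (h1 : v ≤ 1) :
    1 - v ≤ exp (-(v + v ^ 2 / 2)) := by
  rcases h1.eq_or_lt with rfl | h1
  · simpa using (exp_pos _).le
  have hlog : v + v ^ 2 / 2 ≤ -log (1 - v) := by
    have := sum_le_hasSum (range 2) (fun i _ => by positivity)
      (hasSum_pow_div_log_of_abs_lt_one (abs_lt.2 ⟨by linarith, h1⟩))
    norm_num [sum_range_succ] at this
    linarith
  calc 1 - v = exp (log (1 - v)) := (exp_log (by linarith)).symm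
    _ ≤ exp (-(v + v ^ 2 / 2)) := exp_le_exp.2 (by linarith)

lemma pow_le_pow_mul_exp {n p t : ℝ} {k : ℕ} (hn : 0 ≤ n) (hp : 0 ≤ p)
    (hk : (k : ℝ) = n * p) (ht : 0 ≤ t) :
    (p + t) ^ k ≤ p ^ k * exp (n * t) := by
  rcases k.eq_zero_or_pos with rfl | hk0
  · simpa using one_le_exp (mul_nonneg hn ht)
  have hp0 : 0 < p := hp.lt_of_ne <| by
    rintro rfl
    simp only [mul_zero, Nat.cast_eq_zero] at hk
    omega
  calc (p + t) ^ k = p ^ k * (t / p + 1) ^ k := by rw [← mul_pow]; field_simp; ring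
    _ ≤ p ^ k * exp (t / p) ^ k := by gcongr; exact add_one_le_exp _
    _ = p ^ k * exp (n * t) := by rw [← exp_nat_mul, hk]; field_simp

lemma pow_le_pow_mul_exp_neg {n q t : ℝ} {l : ℕ} (hn : 0 < n) (hq : q ≤ 1)
    (hl : (l : ℝ) = n * q) (ht : 0 ≤ t) (htq : t ≤ q) :
    (q - t) ^ l ≤ q ^ l * exp (-(n * t) - n * t ^ 2 / 2) := by
  rcases l.eq_zero_or_pos with rfl | hl0
  · have hq0 : q = 0 := by simpa [hn.ne'] using hl.symm
    simp [le_antisymm (hq0 ▸ htq) ht]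
  have hq0 : 0 < q := pos_of_mul_pos_right (hl ▸ Nat.cast_pos.2 hl0) hn.le
  set v := t / q
  have hexponent : l * -(v + v ^ 2 / 2) ≤ -(n * t) - n * t ^ 2 / 2 := by
    have hlin : l * v = n * t := by simp only [v, hl]; field_simp
    have hquad : n * t ^ 2 / 2 ≤ l * (v ^ 2 / 2) := by
      simp only [v, hl]; field_simp
      exact mul_le_of_le_one_right (sq_nonneg t) hq
    linarith
  calc (q - t) ^ l = q ^ l * (1 - v) ^ l := by simp only [v]; rw [← mul_pow]; field_simp
    _ ≤ q ^ l * exp (-(v + v ^ 2 / 2)) ^ l := by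
        have hv : v ≤ 1 := div_le_one_of_le₀ htq hq0.le
        gcongr
        exact one_sub_le_exp_neg_add_sq_div_two (by positivity) hv
    _ ≤ q ^ l * exp (-(n * t) - n * t ^ 2 / 2) := by rw [← exp_nat_mul]; gcongr

lemma pow_mul_one_sub_pow_le_of_le {n p q s : ℝ} {k l : ℕ} (hn : 0 < n) (hp : 0 ≤ p)
    (hpq : p + q = 1) (hk : (k : ℝ) = n * p) (hl : (l : ℝ) = n * q) (hps : p ≤ s)
    (hs : s ≤ 1) :
    s ^ k * (1 - s) ^ l ≤ p ^ k * q ^ l * exp (-(n * (s - p) ^ 2) / 2) := by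
  have hfirst := pow_le_pow_mul_exp hn.le hp hk (sub_nonneg.2 hps)
  have hsecond := pow_le_pow_mul_exp_neg hn (by linarith) hl (sub_nonneg.2 hps) (by linarith)
  rw [add_sub_cancel] at hfirst
  rw [show q - (s - p) = 1 - s by linarith] at hsecond
  calc s ^ k * (1 - s) ^ l
      ≤ (p ^ k * exp (n * (s - p))) * (q ^ l * exp (-(n * (s - p)) - n * (s - p) ^ 2 / 2)) :=
        mul_le_mul hfirst hsecond (pow_nonneg (by linarith) _) (by positivity)
    _ = p ^ k * q ^ l * exp (-(n * (s - p) ^ 2) / 2) := by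
        rw [mul_mul_mul_comm, ← exp_add]; ring_nf

lemma pow_mul_one_sub_pow_le {n p q s : ℝ} {k l : ℕ} (hn : 0 < n) (hp : 0 ≤ p) (hq : 0 ≤ q)
    (hpq : p + q = 1) (hk : (k : ℝ) = n * p) (hl : (l : ℝ) = n * q) (hs : s ∈ Set.Icc 0 1) :
    s ^ k * (1 - s) ^ l ≤ p ^ k * q ^ l * exp (-(n * (s - p) ^ 2) / 2) := by
  rcases le_total p s with hps | hsp
  · exact pow_mul_one_sub_pow_le_of_le hn hp hpq hk hl hps hs.2
  · have := pow_mul_one_sub_pow_le_of_le hn hq (by linarith) hl hk (by linarith : q ≤ 1 - s)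
      (by linarith [hs.1])
    rw [sub_sub_cancel, show 1 - s - q = -(s - p) by linarith, neg_sq] at this
    linarith [mul_comm (s ^ k) ((1 - s) ^ l), mul_comm (p ^ k) (q ^ l)]

lemma add_choose_mul_pow_mul_pow_le_one {p q : ℝ} (hp : 0 ≤ p) (hq : 0 ≤ q) (hpq : p + q = 1)
    (k l : ℕ) : ((k + l).choose k : ℝ) * p ^ k * q ^ l ≤ 1 := by
  have hk : k ∈ range (k + l + 1) := by simp only [mem_range]; omega
  calc ((k + l).choose k : ℝ) * p ^ k * q ^ l
        = p ^ k * q ^ (k + l - k) * (k + l).choose k := by rw [Nat.add_sub_cancel_left]; ring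
    _ ≤ ∑ i ∈ range (k + l + 1), p ^ i * q ^ (k + l - i) * (k + l).choose i :=
        single_le_sum (f := fun i => p ^ i * q ^ (k + l - i) * (k + l).choose i)
          (fun i _ => by positivity) hk
    _ = 1 := by rw [← add_pow, hpq, one_pow]

lemma rho_eq (k l : ℕ) (s : ℝ) :
    rho k l s = (k + l + 1) * (k + l).choose k * (s ^ k * (1 - s) ^ l) := by
  have h := Nat.add_choose_mul_factorial_mul_factorial k l
  rw [← Nat.choose_symm_add] at h
  unfold rho
  rw [Nat.factorial_succ, ← h]
  push_cast
  field_simp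

theorem rho_le_mul_exp {n k l : ℕ} (hn : 0 < n) (hkl : k + l = n) {s : ℝ}
    (hs : s ∈ Set.Icc 0 1) :
    rho k l s ≤ (n + 1) * exp (-(n * (s - k / n) ^ 2) / 2) := by
  have hn' : (0 : ℝ) < n := Nat.cast_pos.2 hn
  have hpq : (k : ℝ) / n + l / n = 1 := by
    rw [← add_div, div_eq_one_iff_eq hn'.ne']; exact_mod_cast hkl
  have hbound := pow_mul_one_sub_pow_le (k := k) (l := l) hn' (by positivity) (by positivity)
    hpq (by field_simp) (by field_simp) hs
  have hbinom := add_choose_mul_pow_mul_pow_le_one (by positivity) (by positivity) hpq k l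
  have hsum : (k : ℝ) + l = n := by exact_mod_cast hkl
  set gauss := exp (-(n * (s - k / n) ^ 2) / 2)
  rw [rho_eq, hsum]
  calc ((n : ℝ) + 1) * (k + l).choose k * (s ^ k * (1 - s) ^ l)
      ≤ (n + 1) * (k + l).choose k * ((k / n) ^ k * (l / n) ^ l * gauss) := by gcongr
    _ = (n + 1) * ((k + l).choose k * (k / n) ^ k * (l / n) ^ l) * gauss := by ring
    _ ≤ (n + 1) * gauss := by grw [hbinom, mul_one]

lemma rpow_two_mul_le_mul_sq {n ε t : ℝ} (hn : 0 < n) (ht : n ^ (-(1 / 2) + ε) ≤ |t|) :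
    n ^ (2 * ε) ≤ n * t ^ 2 := by
  have hsplit : n ^ (2 * ε) = n * (n ^ (-(1 / 2) + ε)) ^ 2 := by
    rw [show 2 * ε = 1 + (-(1 / 2) + ε) * (2 : ℕ) by push_cast; ring, rpow_add hn, rpow_one,
      rpow_mul hn.le, rpow_natCast]
  rw [hsplit, ← sq_abs t]
  gcongr

lemma add_one_le_three_mul_rpow {n : ℝ} (hn : 1 ≤ n) : n + 1 ≤ 3 * n ^ ((3 : ℝ) / 2) := by
  have : n ≤ n ^ ((3 : ℝ) / 2) := by
    simpa using rpow_le_rpow_of_exponent_le hn (by norm_num : (1 : ℝ) ≤ 3 / 2)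
  linarith

theorem stmt_6_general (ε₀ : ℝ) :
    ∃ n₀ : ℕ, 0 < n₀ ∧ ∀ n : ℕ, n₀ < n → ∀ k l : ℕ, k + l = n →
      ∀ s ∈ Set.Icc (0:ℝ) 1, (n : ℝ) ^ (-(1/2 : ℝ) + ε₀) ≤ |s - (k : ℝ) / (n : ℝ)| →
        rho k l s ≤ 3 * (n : ℝ) ^ ((3 : ℝ) / 2) * Real.exp (-(1/18) * (n : ℝ) ^ (2 * ε₀)) := by
  refine ⟨1, one_pos, fun n hn k l hkl s hs hfar => ?_⟩
  have hn1 : (1 : ℝ) ≤ n := by exact_mod_cast hn.le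
  have hexponent := rpow_two_mul_le_mul_sq (by linarith) hfar
  have hpos : 0 ≤ (n : ℝ) ^ (2 * ε₀) := by positivity
  calc rho k l s ≤ (n + 1) * exp (-(n * (s - k / n) ^ 2) / 2) :=
        rho_le_mul_exp (by omega) hkl hs
    _ ≤ 3 * (n : ℝ) ^ ((3 : ℝ) / 2) * exp (-(1 / 18) * (n : ℝ) ^ (2 * ε₀)) := by
        gcongr
        · exact add_one_le_three_mul_rpow hn1
        · linarith

theorem stmt_6 (ε₀ : ℝ) (hε₀ : ε₀ ∈ Set.Ioo (0:ℝ) (1/2)) :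
    ∃ n₀ : ℕ, 0 < n₀ ∧ ∀ n : ℕ, n₀ < n → ∀ k l : ℕ, k + l = n →
      ∀ s ∈ Set.Icc (0:ℝ) 1, (n : ℝ) ^ (-(1/2 : ℝ) + ε₀) ≤ |s - (k : ℝ) / (n : ℝ)| →
        rho k l s ≤ 3 * (n : ℝ) ^ ((3 : ℝ) / 2) * Real.exp (-(1/18) * (n : ℝ) ^ (2 * ε₀)) :=
  stmt_6_general ε₀
end

section
/- Let f: [0,1] → ℝ be continuous, x ∈ [0,1], and let (pₙ, qₙ) ∈ ℕ × ℕ* be a sequence with pₙ/qₙ ∈ [0,1], qₙ → ∞ and pₙ/qₙ → x. Then ∫₀¹ ρ_{pₙ, qₙ−pₙ}(s) f(s) ds → f(x) as n → ∞. -/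
open Filter Topology Set intervalIntegral
open scoped Nat

section ApproximateIdentity

variable {a b x ε C : ℝ} {f ρ : ℝ → ℝ}

lemma exists_abs_sub_le_add_mul_sq {K : Set ℝ} (hK : IsCompact K)
    (hf : ContinuousOn f K) (hx : x ∈ K) (hε : 0 < ε) :
    ∃ C, ∀ s ∈ K, |f s - f x| ≤ ε + C * (s - x) ^ 2 := by
  obtain ⟨M, hM⟩ := hK.exists_bound_of_continuousOn hf
  obtain ⟨δ, hδ, hfδ⟩ := Metric.continuousWithinAt_iff.mp (hf x hx) ε hε
  have hC : 0 ≤ 2 * M / δ ^ 2 := by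
    have := (norm_nonneg _).trans (hM x hx)
    positivity
  refine ⟨2 * M / δ ^ 2, fun s hs => ?_⟩
  rcases lt_or_ge |s - x| δ with hnear | hfar
  · have := hfδ hs hnear
    rw [Real.dist_eq] at this
    nlinarith [mul_nonneg hC (sq_nonneg (s - x))]
  · have hδsq : δ ^ 2 ≤ (s - x) ^ 2 := by
      rw [← sq_abs (s - x)]
      exact pow_le_pow_left₀ hδ.le hfar 2
    calc |f s - f x| ≤ ‖f s‖ + ‖f x‖ := abs_sub _ _
      _ ≤ 2 * M / δ ^ 2 * δ ^ 2 := by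
        rw [div_mul_cancel₀ _ (by positivity)]
        linarith [hM s hs, hM x hx]
      _ ≤ ε + 2 * M / δ ^ 2 * (s - x) ^ 2 := by
        nlinarith [mul_le_mul_of_nonneg_left hδsq hC]

lemma abs_integral_mul_sub_le (hab : a ≤ b) (hρ : ContinuousOn ρ (Icc a b))
    (hρ_nonneg : ∀ s ∈ Icc a b, 0 ≤ ρ s) (hρ_mass : ∫ s in a..b, ρ s = 1)
    (hf : ContinuousOn f (Icc a b))
    (hfx : ∀ s ∈ Icc a b, |f s - f x| ≤ ε + C * (s - x) ^ 2) :
    |(∫ s in a..b, ρ s * f s) - f x| ≤ ε + C * ∫ s in a..b, ρ s * (s - x) ^ 2 := by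
  have integrable {g : ℝ → ℝ} (hg : ContinuousOn g (Icc a b)) :
      IntervalIntegrable (fun s => ρ s * g s) MeasureTheory.volume a b :=
    (hρ.mul hg).intervalIntegrable_of_Icc hab
  calc |(∫ s in a..b, ρ s * f s) - f x|
      = ‖∫ s in a..b, ρ s * (f s - f x)‖ := by
        simp only [mul_sub, Real.norm_eq_abs]
        rw [integral_sub (integrable hf) (integrable continuousOn_const),
          integral_mul_const, hρ_mass, one_mul]
    _ ≤ ∫ s in a..b, ρ s * (ε + C * (s - x) ^ 2) := by
        refine norm_integral_le_of_norm_le hab (.of_forall fun s hs => ?_)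
          (integrable (by fun_prop))
        have hs' : s ∈ Icc a b := Ioc_subset_Icc_self hs
        rw [Real.norm_eq_abs, abs_mul, abs_of_nonneg (hρ_nonneg s hs')]
        exact mul_le_mul_of_nonneg_left (hfx s hs') (hρ_nonneg s hs')
    _ = ε + C * ∫ s in a..b, ρ s * (s - x) ^ 2 := by
        simp only [mul_add, mul_left_comm (ρ _) C]
        rw [integral_add (integrable continuousOn_const)
            ((integrable (by fun_prop)).const_mul C),
          integral_mul_const, integral_const_mul, hρ_mass, one_mul]

theorem tendsto_integral_mul_of_tendsto_integral_mul_sub_sq {ι : Type*} {l : Filter ι}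
    {ρ : ι → ℝ → ℝ} (hab : a ≤ b) (hf : ContinuousOn f (Icc a b)) (hx : x ∈ Icc a b)
    (hρ : ∀ i, ContinuousOn (ρ i) (Icc a b)) (hρ_nonneg : ∀ i, ∀ s ∈ Icc a b, 0 ≤ ρ i s)
    (hρ_mass : ∀ i, ∫ s in a..b, ρ i s = 1)
    (hρ_var : Tendsto (fun i => ∫ s in a..b, ρ i s * (s - x) ^ 2) l (𝓝 0)) :
    Tendsto (fun i => ∫ s in a..b, ρ i s * f s) l (𝓝 (f x)) := by
  refine Metric.tendsto_nhds.mpr fun ε hε => ?_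
  obtain ⟨C, hC⟩ := exists_abs_sub_le_add_mul_sq isCompact_Icc hf hx (half_pos hε)
  have hCvar : Tendsto (fun i => C * ∫ s in a..b, ρ i s * (s - x) ^ 2) l (𝓝 0) := by
    simpa using hρ_var.const_mul C
  filter_upwards [hCvar.eventually (gt_mem_nhds (half_pos hε))] with i hi
  rw [Real.dist_eq]
  calc _ ≤ ε / 2 + C * ∫ s in a..b, ρ i s * (s - x) ^ 2 :=
        abs_integral_mul_sub_le hab (hρ i) (hρ_nonneg i) (hρ_mass i) hf hC
    _ < ε := by linarith

end ApproximateIdentity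

lemma tendsto_add_div_add {ι : Type*} {l : Filter ι} {u v : ι → ℝ} {x : ℝ}
    (hv : Tendsto v l atTop) (huv : Tendsto (fun i => u i / v i) l (𝓝 x)) (c d : ℝ) :
    Tendsto (fun i => (u i + c) / (v i + d)) l (𝓝 x) := by
  have hlim :
      Tendsto (fun i => (u i / v i + c / v i) / (1 + d / v i)) l (𝓝 ((x + 0) / (1 + 0))) :=
    (huv.add (tendsto_const_nhds.div_atTop hv)).div
      (tendsto_const_nhds.add (tendsto_const_nhds.div_atTop hv)) (by norm_num)
  rw [add_zero, add_zero, div_one] at hlim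
  refine hlim.congr' ?_
  filter_upwards [hv.eventually_gt_atTop 0, hv.eventually_gt_atTop (-d)] with i hv0 hvd
  have : v i + d ≠ 0 := by linarith
  field_simp

lemma integral_pow_mul_one_sub_pow_succ (a b : ℕ) :
    (a + 1 : ℝ) * ∫ s in (0:ℝ)..1, s ^ a * (1 - s) ^ (b + 1) =
      (b + 1) * ∫ s in (0:ℝ)..1, s ^ (a + 1) * (1 - s) ^ b := by
  have ibp := integral_mul_deriv_eq_deriv_mul (a := 0) (b := 1)
    (u := fun s : ℝ => (1 - s) ^ (b + 1)) (u' := fun s => -((b + 1) * (1 - s) ^ b))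
    (v := fun s : ℝ => s ^ (a + 1)) (v' := fun s => (a + 1) * s ^ a)
    (fun s _ => by simpa using ((hasDerivAt_id s).const_sub 1).fun_pow (b + 1))
    (fun s _ => by simpa using hasDerivAt_pow (a + 1) s)
    (by apply Continuous.intervalIntegrable; fun_prop)
    (by apply Continuous.intervalIntegrable; fun_prop)
  norm_num at ibp
  rw [← integral_const_mul, ← integral_const_mul]
  convert ibp using 1 <;> congr 1 <;> ext s <;> ring

lemma integral_pow_mul_one_sub_pow (a b : ℕ) :
    ∫ s in (0:ℝ)..1, s ^ a * (1 - s) ^ b = a ! * b ! / (a + b + 1)! := by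
  induction b generalizing a with
  | zero =>
    simp [Nat.factorial_succ]
    field_simp
  | succ b ih =>
    have h := integral_pow_mul_one_sub_pow_succ a b
    rw [ih, show a + 1 + b + 1 = a + (b + 1) + 1 by ring] at h
    rw [Nat.factorial_succ a] at h
    rw [Nat.factorial_succ b]
    push_cast at h ⊢
    field_simp at h ⊢
    linear_combination h

@[fun_prop]
lemma continuous_rho (k l : ℕ) : Continuous (rho k l) := by
  unfold rho
  fun_prop

lemma rho_nonneg (k l : ℕ) {s : ℝ} (hs : s ∈ Icc (0:ℝ) 1) : 0 ≤ rho k l s := by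
  have : 0 ≤ 1 - s := sub_nonneg.mpr hs.2
  have := hs.1
  unfold rho
  positivity

lemma integral_rho_mul_pow (k l j : ℕ) :
    ∫ s in (0:ℝ)..1, rho k l s * s ^ j =
      (k + l + 1)! * (k + j)! / (k ! * (k + l + j + 1)!) := by
  have hrho (s : ℝ) :
      rho k l s * s ^ j = (k + l + 1)! / (k ! * l !) * (s ^ (k + j) * (1 - s) ^ l) := by
    unfold rho
    ring
  simp only [hrho, integral_const_mul, integral_pow_mul_one_sub_pow, add_right_comm k j l]
  field_simp

lemma integral_rho (k l : ℕ) : ∫ s in (0:ℝ)..1, rho k l s = 1 := by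
  have h := integral_rho_mul_pow k l 0
  simp only [pow_zero, mul_one, add_zero] at h
  rw [h]
  field_simp

lemma integral_rho_mul_pow_succ (k l j : ℕ) :
    ∫ s in (0:ℝ)..1, rho k l s * s ^ (j + 1) =
      (k + j + 1) / (k + l + j + 2) * ∫ s in (0:ℝ)..1, rho k l s * s ^ j := by
  rw [integral_rho_mul_pow, integral_rho_mul_pow, ← add_assoc, ← add_assoc,
    Nat.factorial_succ (k + j), Nat.factorial_succ (k + l + j + 1)]
  push_cast
  field_simp
  ring

lemma integral_rho_mul_sub_sq (k l : ℕ) (x : ℝ) :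
    ∫ s in (0:ℝ)..1, rho k l s * (s - x) ^ 2 =
      x ^ 2 - 2 * x * ((k + 1) / (k + l + 2)) +
        (k + 1) / (k + l + 2) * ((k + 2) / (k + l + 3)) := by
  have hm1 := integral_rho_mul_pow_succ k l 0
  have hm2 := integral_rho_mul_pow_succ k l 1
  norm_num [integral_rho] at hm1 hm2
  have hexp (s : ℝ) : rho k l s * (s - x) ^ 2 =
      rho k l s * s ^ 2 - 2 * x * (rho k l s * s) + x ^ 2 * rho k l s := by
    ring
  simp only [hexp]
  rw [integral_add, integral_sub, integral_const_mul, integral_const_mul, integral_rho, hm2, hm1]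
  · ring
  all_goals apply Continuous.intervalIntegrable; fun_prop

theorem stmt_7 (f : ℝ → ℝ) (hf : ContinuousOn f (Set.Icc (0:ℝ) 1))
    (x : ℝ) (hx : x ∈ Set.Icc (0:ℝ) 1)
    (p q : ℕ → ℕ) (hq : ∀ n, 0 < q n)
    (hpq : ∀ n, (p n : ℝ) / (q n : ℝ) ∈ Set.Icc (0:ℝ) 1)
    (hqt : Filter.Tendsto q Filter.atTop Filter.atTop)
    (hxa : Filter.Tendsto (fun n => (p n : ℝ) / (q n : ℝ)) Filter.atTop (nhds x)) :
    Filter.Tendsto (fun n => ∫ s in (0:ℝ)..1, rho (p n) (q n - p n) s * f s)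
      Filter.atTop (nhds (f x)) := by
  have hp_le_q (n : ℕ) : p n ≤ q n := by
    exact_mod_cast (div_le_one (by exact_mod_cast hq n)).mp (hpq n).2
  have hq_real : Tendsto (fun n => (q n : ℝ)) atTop atTop :=
    tendsto_natCast_atTop_atTop.comp hqt
  have hmean := tendsto_add_div_add hq_real hxa 1 2
  have hvar : Tendsto (fun n => x ^ 2 - 2 * x * ((p n + 1) / (q n + 2)) +
      (p n + 1) / (q n + 2) * ((p n + 2) / (q n + 3))) atTop (𝓝 0) := by
    convert (tendsto_const_nhds.sub (hmean.const_mul (2 * x))).add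
      (hmean.mul (tendsto_add_div_add hq_real hxa 2 3)) using 2
    ring
  refine tendsto_integral_mul_of_tendsto_integral_mul_sub_sq zero_le_one hf hx
    (fun _ => (continuous_rho _ _).continuousOn) (fun _ _ => rho_nonneg _ _)
    (fun _ => integral_rho _ _) (hvar.congr fun n => ?_)
  rw [integral_rho_mul_sub_sq, Nat.cast_sub (hp_le_q n), add_sub_cancel]
end

section
/- Asymptotic L¹ semi-norm recovery: let γ̂ ∈ C¹([0,1], ℝ^{d-1}) and γ(s) = (s, γ̂(s)). With L_{k,l}(S(γ)) ∈ ℝ^{d-1} the vector of signature coefficients on e₁^⊗k ⊗ e_{j+1} ⊗ e₁^⊗l (j = 1,…,d−1), one has limsup_{n→∞} n! · Σ_{k=1}^{n} |L_{k, n−k}(S(γ))| = ∫₀¹ |γ̂'(s)| ds, the total variation of γ̂. -/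
/-!
With `b n k s = (n choose k) s^k (1-s)^(n-k)` the Bernstein basis, `n! L_{k,n-k} = ∫₀¹ b n k • γ'`,
so the quantity in question is `∑_{k=0}^n ‖∫ b n k • γ'‖` minus its `k = 0` term, which tends
to `0`. Since the `b n k` are nonnegative and sum to `1`, that sum is at most `∫ ‖γ'‖`; conversely,
freezing `γ'` at `k/n` on the `k`-th term shows that it falls short of `∫ ‖γ'‖` by at most
`2 ∫ ∑_k b n k s ‖γ' s - γ' (k/n)‖ ds`. The integrand is the Bernstein approximation of
`t ↦ ‖γ' s - γ' t‖` evaluated at `t = s`, hence tends to `0` for every `s`, and the error vanishes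
by dominated convergence. So the sequence converges and its limsup is its limit.
-/

open Set Filter Topology MeasureTheory intervalIntegral
open scoped Nat unitInterval Interval

noncomputable def bernsteinBasis (n k : ℕ) (s : ℝ) : ℝ :=
  n.choose k * s ^ k * (1 - s) ^ (n - k)

theorem continuous_bernsteinBasis (n k : ℕ) : Continuous (bernsteinBasis n k) := by
  unfold bernsteinBasis; fun_prop

theorem bernsteinBasis_nonneg {n k : ℕ} {s : ℝ} (hs : s ∈ Icc 0 1) :
    0 ≤ bernsteinBasis n k s := by
  have h₀ : 0 ≤ s := hs.1
  have h₁ : 0 ≤ 1 - s := sub_nonneg.2 hs.2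
  unfold bernsteinBasis; positivity

theorem sum_bernsteinBasis (n : ℕ) (s : ℝ) :
    ∑ k ∈ Finset.range (n + 1), bernsteinBasis n k s = 1 := by
  simpa [bernsteinBasis, mul_comm, mul_left_comm, mul_assoc] using (add_pow s (1 - s) n).symm

theorem bernsteinBasis_zero_right (n : ℕ) (s : ℝ) : bernsteinBasis n 0 s = (1 - s) ^ n := by
  simp [bernsteinBasis]

theorem bernsteinBasis_eq_factorial_mul {n k : ℕ} (hk : k ≤ n) (s : ℝ) :
    bernsteinBasis n k s = n ! * (s ^ k * (1 - s) ^ (n - k) / (k ! * (n - k)!)) := by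
  rw [bernsteinBasis, Nat.cast_choose ℝ hk]
  ring

theorem natCast_div_mem_Icc {n k : ℕ} (hk : k ≤ n) : (k / n : ℝ) ∈ Icc 0 1 :=
  ⟨by positivity, div_le_one_of_le₀ (by exact_mod_cast hk) n.cast_nonneg⟩

theorem sum_integral_bernsteinBasis_mul {g : ℝ → ℝ} (hg : IntervalIntegrable g volume 0 1)
    (n : ℕ) :
    ∑ k ∈ Finset.range (n + 1), ∫ s in (0:ℝ)..1, bernsteinBasis n k s * g s =
      ∫ s in (0:ℝ)..1, g s := by
  rw [← integral_finsetSum fun k _ =>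
    hg.continuousOn_mul (continuous_bernsteinBasis n k).continuousOn]
  simp only [← Finset.sum_mul, sum_bernsteinBasis, one_mul]

section

variable {E : Type*} [NormedAddCommGroup E]

theorem tendsto_sum_bernsteinBasis_mul_norm_sub {f : ℝ → E} (hf : ContinuousOn f (Icc 0 1))
    {s : ℝ} (hs : s ∈ Icc 0 1) :
    Tendsto (fun n : ℕ => ∑ k ∈ Finset.range (n + 1), bernsteinBasis n k s * ‖f s - f (k / n)‖)
      atTop (𝓝 0) := by
  let g : C(I, ℝ) := ⟨fun t => ‖f s - f t‖, (continuousOn_const.sub hf).norm.domRestrict⟩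
  have h := ((continuous_eval_const (⟨s, hs⟩ : I)).tendsto g).comp
    (bernsteinApproximation_uniform g)
  convert h using 2
  · rename_i n
    simp only [Function.comp_apply, bernsteinApproximation.apply, bernstein_apply, bernstein.z,
      smul_eq_mul, bernsteinBasis, g]
    exact (Fin.sum_univ_eq_sum_range (fun k => bernsteinBasis n k s * ‖f s - f (k / n)‖) _).symm
  · show (0:ℝ) = ‖f s - f s‖
    simp

theorem tendsto_integral_sum_bernsteinBasis_mul_norm_sub {f : ℝ → E}
    (hf : ContinuousOn f (Icc 0 1)) :
    Tendsto (fun n : ℕ => ∫ s in (0:ℝ)..1,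
      ∑ k ∈ Finset.range (n + 1), bernsteinBasis n k s * ‖f s - f (k / n)‖) atTop (𝓝 0) := by
  obtain ⟨M, hM⟩ := isCompact_Icc.exists_bound_of_continuousOn hf
  have hIoc : Ι (0:ℝ) 1 ⊆ Icc 0 1 := by
    rw [uIoc_of_le zero_le_one]; exact Ioc_subset_Icc_self
  have hcont : ∀ n : ℕ, ContinuousOn (fun s =>
      ∑ k ∈ Finset.range (n + 1), bernsteinBasis n k s * ‖f s - f (k / n)‖) (Icc 0 1) :=
    fun n => continuousOn_finsetSum _ fun k _ =>
      (continuous_bernsteinBasis n k).continuousOn.mul (hf.sub continuousOn_const).norm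
  have hbound : ∀ n : ℕ, ∀ s ∈ Icc (0:ℝ) 1,
      ‖∑ k ∈ Finset.range (n + 1), bernsteinBasis n k s * ‖f s - f (k / n)‖‖ ≤ 2 * M := by
    intro n s hs
    calc _ = ∑ k ∈ Finset.range (n + 1), bernsteinBasis n k s * ‖f s - f (k / n)‖ :=
          Real.norm_of_nonneg <| Finset.sum_nonneg fun k _ =>
            mul_nonneg (bernsteinBasis_nonneg hs) (norm_nonneg _)
      _ ≤ ∑ k ∈ Finset.range (n + 1), bernsteinBasis n k s * (2 * M) := by
          refine Finset.sum_le_sum fun k hk =>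
            mul_le_mul_of_nonneg_left ?_ (bernsteinBasis_nonneg hs)
          have hk := natCast_div_mem_Icc (Finset.mem_range_succ_iff.1 hk)
          linarith [norm_sub_le (f s) (f (k / n)), hM s hs, hM _ hk]
      _ = 2 * M := by rw [← Finset.sum_mul, sum_bernsteinBasis, one_mul]
  have h := tendsto_integral_filter_of_dominated_convergence (fun _ => 2 * M)
    (Eventually.of_forall fun n => ((hcont n).mono hIoc).aestronglyMeasurable measurableSet_uIoc)
    (Eventually.of_forall fun n => ae_of_all _ fun s hs => hbound n s (hIoc hs))
    (intervalIntegrable_const (μ := volume))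
    (ae_of_all _ fun s hs => tendsto_sum_bernsteinBasis_mul_norm_sub hf (hIoc hs))
  simpa using h

variable [NormedSpace ℝ E]

theorem tendsto_integral_one_sub_pow_smul {f : ℝ → E} (hf : IntervalIntegrable f volume 0 1) :
    Tendsto (fun n : ℕ => ∫ s in (0:ℝ)..1, (1 - s) ^ n • f s) atTop (𝓝 0) := by
  have hbase : ∀ s ∈ Ι (0:ℝ) 1, 0 ≤ 1 - s ∧ 1 - s < 1 := fun s hs => by
    rw [uIoc_of_le zero_le_one] at hs
    constructor <;> linarith [hs.1, hs.2]
  have h := tendsto_integral_filter_of_dominated_convergence (l := atTop)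
    (F := fun (n : ℕ) s => (1 - s) ^ n • f s) (f := 0) (fun s => ‖f s‖)
    (Eventually.of_forall fun n =>
      ((continuous_const.sub continuous_id).pow n).aestronglyMeasurable.smul hf.def'.1)
    (Eventually.of_forall fun n => ae_of_all _ fun s hs => by
      rw [norm_smul, norm_pow, Real.norm_of_nonneg (hbase s hs).1]
      exact mul_le_of_le_one_left (norm_nonneg _)
        (pow_le_one₀ (hbase s hs).1 (hbase s hs).2.le))
    hf.norm
    (ae_of_all _ fun s hs => by
      simpa using (tendsto_pow_atTop_nhds_zero_of_lt_one (hbase s hs).1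
        (hbase s hs).2).smul_const (f s))
  simpa using h

theorem sum_norm_integral_bernsteinBasis_smul_le {f : ℝ → E} (hf : ContinuousOn f (Icc 0 1))
    (n : ℕ) :
    ∑ k ∈ Finset.range (n + 1), ‖∫ s in (0:ℝ)..1, bernsteinBasis n k s • f s‖ ≤
      ∫ s in (0:ℝ)..1, ‖f s‖ := by
  have hnorm := hf.norm.intervalIntegrable_of_Icc (μ := volume) zero_le_one
  rw [← sum_integral_bernsteinBasis_mul hnorm n]
  refine Finset.sum_le_sum fun k _ => norm_integral_le_of_norm_le zero_le_one ?_
    (hnorm.continuousOn_mul (continuous_bernsteinBasis n k).continuousOn)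
  refine ae_of_all _ fun s hs => ?_
  rw [norm_smul, Real.norm_of_nonneg (bernsteinBasis_nonneg (Ioc_subset_Icc_self hs))]

variable [CompleteSpace E]

theorem integral_mul_norm_le_norm_integral_smul_add {α : Type*} [MeasurableSpace α]
    {μ : Measure α} {w : α → ℝ} {f : α → E} (hw0 : 0 ≤ᵐ[μ] w) (hw : Integrable w μ)
    (hwf : Integrable (fun x => w x • f x) μ) (c : E) :
    ∫ x, w x * ‖f x‖ ∂μ ≤ ‖∫ x, w x • f x ∂μ‖ + 2 * ∫ x, w x * ‖f x - c‖ ∂μ := by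
  have hwc : Integrable (fun x => w x • c) μ := hw.smul_const c
  have hnorm : ∀ g : α → E, (fun x => ‖w x • g x‖) =ᵐ[μ] fun x => w x * ‖g x‖ := fun g => by
    filter_upwards [hw0] with x hx
    rw [norm_smul, Real.norm_of_nonneg hx]
  have hnorm_sub : (fun x => ‖w x • f x - w x • c‖) =ᵐ[μ] fun x => w x * ‖f x - c‖ := by
    simpa only [smul_sub] using hnorm fun x => f x - c
  have hdev : Integrable (fun x => w x * ‖f x - c‖) μ := (hwf.sub hwc).norm.congr hnorm_sub
  have hsplit : ∫ x, w x * ‖f x‖ ∂μ ≤ ‖∫ x, w x • c ∂μ‖ + ∫ x, w x * ‖f x - c‖ ∂μ :=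
    calc ∫ x, w x * ‖f x‖ ∂μ ≤ ∫ x, (w x * ‖c‖ + w x * ‖f x - c‖) ∂μ := by
          refine integral_mono_ae (hwf.norm.congr (hnorm f)) ((hw.mul_const _).add hdev) ?_
          filter_upwards [hw0] with x hx
          rw [← mul_add]
          exact mul_le_mul_of_nonneg_left (norm_le_norm_add_norm_sub' (f x) c) hx
      _ = ‖∫ x, w x • c ∂μ‖ + ∫ x, w x * ‖f x - c‖ ∂μ := by
          rw [integral_add (hw.mul_const _) hdev, MeasureTheory.integral_mul_const,
            _root_.integral_smul_const, norm_smul,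
            Real.norm_of_nonneg (integral_nonneg_of_ae hw0)]
  have hconst : ‖∫ x, w x • c ∂μ‖ ≤ ‖∫ x, w x • f x ∂μ‖ + ∫ x, w x * ‖f x - c‖ ∂μ :=
    calc ‖∫ x, w x • c ∂μ‖ = ‖∫ x, w x • f x ∂μ - ∫ x, (w x • f x - w x • c) ∂μ‖ := by
          rw [integral_sub hwf hwc, sub_sub_cancel]
      _ ≤ ‖∫ x, w x • f x ∂μ‖ + ‖∫ x, (w x • f x - w x • c) ∂μ‖ := norm_sub_le _ _
      _ ≤ ‖∫ x, w x • f x ∂μ‖ + ∫ x, w x * ‖f x - c‖ ∂μ := by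
          gcongr; exact norm_integral_le_of_norm_le hdev hnorm_sub.le
  linarith

theorem integral_norm_le_sum_norm_integral_bernsteinBasis_smul_add {f : ℝ → E}
    (hf : ContinuousOn f (Icc 0 1)) (n : ℕ) :
    ∫ s in (0:ℝ)..1, ‖f s‖ ≤
      ∑ k ∈ Finset.range (n + 1), ‖∫ s in (0:ℝ)..1, bernsteinBasis n k s • f s‖ +
        2 * ∫ s in (0:ℝ)..1,
          ∑ k ∈ Finset.range (n + 1), bernsteinBasis n k s * ‖f s - f (k / n)‖ := by
  have hdev : ∀ k : ℕ,
      IntervalIntegrable (fun s => bernsteinBasis n k s * ‖f s - f (k / n)‖) volume 0 1 :=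
    fun k => ((hf.sub continuousOn_const).norm.intervalIntegrable_of_Icc zero_le_one)
      |>.continuousOn_mul (continuous_bernsteinBasis n k).continuousOn
  rw [← sum_integral_bernsteinBasis_mul (hf.norm.intervalIntegrable_of_Icc zero_le_one) n,
    integral_finsetSum fun k _ => hdev k, Finset.mul_sum, ← Finset.sum_add_distrib]
  refine Finset.sum_le_sum fun k _ => ?_
  have h := integral_mul_norm_le_norm_integral_smul_add (μ := volume.restrict (Ioc 0 1))
    (ae_restrict_of_forall_mem measurableSet_Ioc fun s hs =>
      bernsteinBasis_nonneg (Ioc_subset_Icc_self hs))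
    (continuous_bernsteinBasis n k).integrableOn_Ioc
    (((continuous_bernsteinBasis n k).continuousOn.smul hf).integrableOn_Icc.mono_set
      Ioc_subset_Icc_self) (f (k / n))
  simpa only [integral_of_le zero_le_one] using h

theorem tendsto_sum_norm_integral_bernsteinBasis_smul {f : ℝ → E}
    (hf : ContinuousOn f (Icc 0 1)) :
    Tendsto (fun n : ℕ =>
      ∑ k ∈ Finset.range (n + 1), ‖∫ s in (0:ℝ)..1, bernsteinBasis n k s • f s‖)
      atTop (𝓝 (∫ s in (0:ℝ)..1, ‖f s‖)) := by
  have hlower := (tendsto_integral_sum_bernsteinBasis_mul_norm_sub hf).const_mul 2 |>.const_sub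
    (∫ s in (0:ℝ)..1, ‖f s‖)
  rw [mul_zero, sub_zero] at hlower
  refine tendsto_of_tendsto_of_tendsto_of_le_of_le hlower tendsto_const_nhds
    (fun n => ?_) (sum_norm_integral_bernsteinBasis_smul_le hf)
  linarith [integral_norm_le_sum_norm_integral_bernsteinBasis_smul_add hf n]

end

theorem EuclideanSpace.intervalIntegral_apply {ι : Type*} [Fintype ι]
    {g : ℝ → EuclideanSpace ℝ ι} {a b : ℝ} (hg : IntervalIntegrable g volume a b) (j : ι) :
    (∫ s in a..b, g s) j = ∫ s in a..b, g s j :=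
  ((EuclideanSpace.proj j).intervalIntegral_comp_comm hg).symm

theorem Finset.sum_range_succ_eq_add_sum_Icc {M : Type*} [AddCommMonoid M] (f : ℕ → M) (n : ℕ) :
    ∑ k ∈ Finset.range (n + 1), f k = f 0 + ∑ k ∈ Finset.Icc 1 n, f k := by
  rw [Finset.range_eq_Ico, Finset.sum_eq_sum_Ico_succ_bot n.add_one_pos, zero_add,
    Finset.Ico_add_one_right_eq_Icc]

theorem stmt_18_general (m : ℕ) (γ' : ℝ → EuclideanSpace ℝ (Fin m))
    (hγ' : ContinuousOn γ' (Set.Icc (0:ℝ) 1))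
    (L : ℕ → ℕ → EuclideanSpace ℝ (Fin m))
    (hL : ∀ k l : ℕ, ∀ j : Fin m,
      L k l j = ∫ s in (0:ℝ)..1, s ^ k * (1 - s) ^ l / (k.factorial * l.factorial) * γ' s j) :
    Filter.limsup (fun n : ℕ => (n.factorial : ℝ) *
        ∑ k ∈ Finset.Icc 1 n, ‖L k (n - k)‖)
      Filter.atTop = ∫ s in (0:ℝ)..1, ‖γ' s‖ := by
  have hL' : ∀ k l, L k l = ∫ s in (0:ℝ)..1, (s ^ k * (1 - s) ^ l / (k ! * l !)) • γ' s := by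
    intro k l
    have hint : IntervalIntegrable (fun s => (s ^ k * (1 - s) ^ l / (k ! * l !)) • γ' s)
        volume 0 1 :=
      ((Continuous.continuousOn (f := fun s : ℝ => s ^ k * (1 - s) ^ l / (k ! * l !))
        (by fun_prop)).smul hγ').intervalIntegrable_of_Icc zero_le_one
    ext j
    rw [hL, EuclideanSpace.intervalIntegral_apply hint]
    rfl
  have hscaled : ∀ n, (n ! : ℝ) * ∑ k ∈ Finset.Icc 1 n, ‖L k (n - k)‖ =
      ∑ k ∈ Finset.range (n + 1), ‖∫ s in (0:ℝ)..1, bernsteinBasis n k s • γ' s‖ -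
        ‖∫ s in (0:ℝ)..1, (1 - s) ^ n • γ' s‖ := fun n => by
    rw [Finset.sum_range_succ_eq_add_sum_Icc, Finset.mul_sum]
    simp only [bernsteinBasis_zero_right, add_sub_cancel_left]
    refine Finset.sum_congr rfl fun k hk => ?_
    rw [hL', ← Real.norm_of_nonneg (Nat.cast_nonneg (n !)), ← norm_smul,
      ← intervalIntegral.integral_smul]
    simp only [smul_smul, bernsteinBasis_eq_factorial_mul (Finset.mem_Icc.1 hk).2]
  refine Tendsto.limsup_eq ?_
  simpa [hscaled] using (tendsto_sum_norm_integral_bernsteinBasis_smul hγ').sub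
    (tendsto_integral_one_sub_pow_smul (hγ'.intervalIntegrable_of_Icc zero_le_one)).norm

theorem stmt_18 (m : ℕ) (γ γ' : ℝ → EuclideanSpace ℝ (Fin m))
    (hγ : ∀ s ∈ Set.Icc (0:ℝ) 1, HasDerivAt γ (γ' s) s)
    (hγ' : ContinuousOn γ' (Set.Icc (0:ℝ) 1))
    (L : ℕ → ℕ → EuclideanSpace ℝ (Fin m))
    (hL : ∀ k l : ℕ, ∀ j : Fin m,
      L k l j = ∫ s in (0:ℝ)..1, s ^ k * (1 - s) ^ l / (k.factorial * l.factorial) * γ' s j) :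
    Filter.limsup (fun n : ℕ => (n.factorial : ℝ) *
        ∑ k ∈ Finset.Icc 1 n, ‖L k (n - k)‖)
      Filter.atTop = ∫ s in (0:ℝ)..1, ‖γ' s‖ :=
  stmt_18_general m γ' hγ' L hL
end
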